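/- arXiv:1704.05229 — 5 statements merged into one kernel-verified Lean document; each statement's English description precedes it below -/
import Mathlib

section
/- Let C be a unital alternative algebra over a commutative unital ring R and let a, b ∈ C be invertible. Then B_a is an algebra isomorphism from the isotope C^{a,b} onto C^{1, b·a⁻¹}, and B_b is an algebra isomorphism from C^{a,b} onto C^{b⁻¹·a, 1}. In particular, taking b = a, the isotope C^{a,a} is isomorphic to C as an R-algebra. -/
section AltAux

variable {C : Type*} [NonAssocRing C]

theorem lin1' (halt₁ : ∀ x y : C, x * (x * y) = (x * x) * y) :
    ∀ u v w : C, u * (v * w) + v * (u * w) = (u * v) * w + (v * u) * w := by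
  intro u v w
  linear_combination (norm := ((try simp only [mul_add, add_mul, mul_sub, sub_mul]); first | abel1 | abel_nf))
    halt₁ (u + v) w - halt₁ u w - halt₁ v w

theorem lin2' (halt₂ : ∀ x y : C, (y * x) * x = y * (x * x)) :
    ∀ u v w : C, (w * u) * v + (w * v) * u = w * (u * v) + w * (v * u) := by
  intro u v w
  linear_combination (norm := ((try simp only [mul_add, add_mul, mul_sub, sub_mul]); first | abel1 | abel_nf))
    halt₂ (u + v) w - halt₂ u w - halt₂ v w

theorem mm' (halt₁ : ∀ x y : C, x * (x * y) = (x * x) * y)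
    (halt₂ : ∀ x y : C, (y * x) * x = y * (x * x)) :
    ∀ a x y : C, (a * x) * (y * a) = a * ((x * y) * a) := by
  have lin1 := lin1' halt₁
  have lin2 := lin2' halt₂
  intro a x y
  linear_combination (norm := ((try simp only [mul_add, add_mul, mul_sub, sub_mul]); first | abel1 | abel_nf))
    (lin2 (y * a) x a) + (lin2 (y * a) x a) + (lin2 (y * a) x a) + (lin2 (y * a) x a) - (lin2 y a (x * a)) - (lin2 a y (a * x)) - (lin2 a y (a * x)) + (lin1 x a (a * y)) + (lin1 x a (a * y)) - (lin2 y (x * a) a) + (lin1 (y * a) a x) + (lin1 (y * a) a x) + (lin2 (y * a) a x) + (lin2 (y * a) a x) - (lin1 a (x * a) y) + (lin1 (x * y) a a) + (lin1 (x * y) a a) + (lin2 (x * y) a a) + (lin2 (x * y) a a) + (lin2 x (a * a) y) + (lin2 x (a * a) y) + (lin1 x y (a * a)) + (lin1 x y (a * a)) + (lin1 x a (y * a)) + (lin1 x a (y * a)) + (lin1 x a (y * a)) - (lin1 y (a * x) a) - (lin1 y (a * x) a) - (lin2 y (a * x) a) - (lin2 y (a * x) a) - (lin1 a (a * x) y)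 - (lin1 a (a * x) y) - (lin2 a (a * x) y) - (lin2 a (a * x) y) + (lin1 (a * y) x a) + (lin2 (a * y) x a) + (lin2 (a * y) x a) - (lin1 a (y * x) a) + (lin1 (a * y) a x) + (lin1 (a * y) a x) + (lin2 (a * y) a x) + (lin2 (a * y) a x) - (halt₂ a (y * x)) + (halt₁ a (x * y)) + (halt₁ a (x * y)) - (a * (lin1 y x a)) - (a * (lin2 y x a)) - (a * (lin2 y x a)) + ((lin2 y x a) * a) - (a * (lin1 a y x)) - (a * (lin1 a y x)) - (a * (lin2 a y x)) - (a * (lin2 a y x)) + ((lin2 a y x) * a) + ((lin2 a y x) * a) - (a * (lin1 x a y)) - (a * (lin1 x a y)) + ((lin1 x a y) * a) - (x * (lin1 y a a)) - (x * (lin1 y a a)) - ((lin1 y a a) * x) - ((lin1 y a a) * x) - (x * (lin2 y a a)) - (x * (halt₁ a y)) - (y * (halt₁ a x)) - (y * (halt₁ a x))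

theorem lm' (halt₁ : ∀ x y : C, x * (x * y) = (x * x) * y)
    (halt₂ : ∀ x y : C, (y * x) * x = y * (x * x)) :
    ∀ a x y : C, a * (x * (a * y)) = ((a * x) * a) * y := by
  have lin1 := lin1' halt₁
  have lin2 := lin2' halt₂
  intro a x y
  linear_combination (norm := ((try simp only [mul_add, add_mul, mul_sub, sub_mul]); first | abel1 | abel_nf))
    - (lin2 (y * a) x a) - (lin2 (y * a) x a) - (lin1 (y * a) a x) - (lin2 (y * a) a x) - (lin1 (x * y) a a) - (lin2 x (a * a) y) - (lin1 x y (a * a)) - (lin1 x a (y * a)) + (lin1 y (a * x) a) + (lin2 y (a * x) a) + (lin1 a (a * x) y) + (lin2 a (a * x) y) - (lin2 (a * y) x a) - (lin1 (a * y) a x) + (a * (lin2 y x a)) + (a * (lin1 a y x)) + (a * (lin2 a y x)) - ((lin2 a y x) * a) + (a * (lin1 x a y)) - ((lin1 x a y) * a) + (x * (lin1 y a a)) + ((lin1 y a a) * x) + (x * (lin2 y a a)) + (x * (halt₁ a y)) + (y * (halt₁ a x))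

theorem rm' (halt₁ : ∀ x y : C, x * (x * y) = (x * x) * y)
    (halt₂ : ∀ x y : C, (y * x) * x = y * (x * x)) :
    ∀ a x y : C, ((x * a) * y) * a = x * ((a * y) * a) := by
  have lin1 := lin1' halt₁
  have lin2 := lin2' halt₂
  intro a x y
  linear_combination (norm := ((try simp only [mul_add, add_mul, mul_sub, sub_mul]); first | abel1 | abel_nf))
    - (lin2 (y * a) x a) - (lin2 (y * a) x a) + (lin2 y a (x * a)) + (lin2 a y (a * x)) - (lin1 x a (a * y)) + (lin2 y (x * a) a) - (lin1 (y * a) a x) - (lin2 (y * a) a x) + (lin1 a (x * a) y) - (lin1 (x * y) a a) - (lin2 (x * y) a a) - (lin2 x (a * a) y) - (lin1 x y (a * a)) - (lin1 x a (y * a)) - (lin1 x a (y * a)) + (lin1 y (a * x) a) + (lin2 y (a * x) a) + (lin1 a (a * x) y) + (lin2 a (a * x) y) - (lin1 (a * y) x a) - (lin2 (a * y) x a) + (lin1 a (y * x) a) - (lin1 (a * y) a x) - (lin2 (a * y) a x) + (halt₂ a (y * x)) - (halt₁ a (x * y)) + (a * (lin1 y x a)) + (a * (lin2 y x a)) - ((lin2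 y x a) * a) + (a * (lin1 a y x)) + (a * (lin2 a y x)) - ((lin2 a y x) * a) + (a * (lin1 x a y)) - ((lin1 x a y) * a) + (x * (lin1 y a a)) + ((lin1 y a a) * x) + (y * (halt₁ a x))

theorem flex' (halt₁ : ∀ x y : C, x * (x * y) = (x * x) * y)
    (halt₂ : ∀ x y : C, (y * x) * x = y * (x * x)) :
    ∀ x y : C, (x * y) * x = x * (y * x) := by
  intro x y
  linear_combination (norm := (first | abel1 | abel_nf)) - lin1' halt₁ x y x - halt₂ x y

theorem linmm' (halt₁ : ∀ x y : C, x * (x * y) = (x * x) * y)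
    (halt₂ : ∀ x y : C, (y * x) * x = y * (x * x)) :
    ∀ a w x y : C, (a * x) * (y * w) + (w * x) * (y * a) =
      a * ((x * y) * w) + w * ((x * y) * a) := by
  intro a w x y
  linear_combination (norm := ((try simp only [mul_add, add_mul, mul_sub, sub_mul]); first | abel1 | abel_nf)) mm' halt₁ halt₂ (a + w) x y - mm' halt₁ halt₂ a x y - mm' halt₁ halt₂ w x y

theorem inv_cancel (halt₁ : ∀ x y : C, x * (x * y) = (x * x) * y)
    (halt₂ : ∀ x y : C, (y * x) * x = y * (x * x))
    (a a' : C) (ha : a * a' = 1) (ha' : a' * a = 1) :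
    ∀ x : C, (x * a) * a' = x ∧ a' * (a * x) = x := by
  have mm := mm' halt₁ halt₂
  have fl := flex' halt₁ halt₂
  have s1 : ∀ u : C, a' * ((u * a) * a') = a' * u := by
    intro u
    have h := mm a' u a
    rw [ha, mul_one] at h
    exact h.symm
  have s2 : ∀ v : C, a' * ((a * v) * a') = v * a' := by
    intro v
    have h := mm a' a v
    rw [ha', one_mul] at h
    exact h.symm
  intro x
  have hEE : a' * (a * x) = (x * a) * a' := by
    calc a' * (a * x) = a' * (((a * x) * a) * a') := (s1 (a * x)).symm
      _ = a' * ((a * (x * a)) * a') := by rw [fl a x]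
      _ = (x * a) * a' := s2 (x * a)
  have hy1 : a' * ((x * a) * a' - x) = 0 := by rw [mul_sub, s1 x, sub_self]
  have hy4 : ((x * a) * a' - x) * a = 0 := by
    rw [sub_mul]
    have h := rm' halt₁ halt₂ a x a'
    rw [h, ha, one_mul, sub_self]
  have key := linmm' halt₁ halt₂ a 1 a' ((x * a) * a' - x)
  simp only [ha, hy4, hy1, mul_one, one_mul, mul_zero, zero_mul, add_zero] at key
  have hY : (x * a) * a' = x := sub_eq_zero.mp key
  exact ⟨hY, by rw [hEE, hY]⟩

end AltAux

/-- Let `C` be a unital alternative algebra over a commutative unital ring `R`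
and `a, b ∈ C` invertible. Then `B_a : x ↦ (a·x)·a` is an algebra isomorphism
from the isotope `C^{a,b}` onto `C^{1, b·a⁻¹}`, and `B_b` is an algebra
isomorphism from `C^{a,b}` onto `C^{b⁻¹·a, 1}`. In particular `C^{a,a} ≅ C`
as `R`-algebras. -/
theorem isotope_B_isomorphisms
    {R C : Type*} [CommRing R] [NonAssocRing C] [Module R C]
    [SMulCommClass R C C] [IsScalarTower R C C]
    (halt₁ : ∀ x y : C, x * (x * y) = (x * x) * y)
    (halt₂ : ∀ x y : C, (y * x) * x = y * (x * x))
    (a b a' b' : C) (ha : a * a' = 1) (ha' : a' * a = 1)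
    (hb : b * b' = 1) (hb' : b' * b = 1) :
    (Function.Bijective (fun x : C => (a * x) * a) ∧
      ∀ x y : C, (a * ((x * a) * (b * y))) * a =
        ((a * x) * a) * ((b * a') * ((a * y) * a))) ∧
    (Function.Bijective (fun x : C => (b * x) * b) ∧
      ∀ x y : C, (b * ((x * a) * (b * y))) * b =
        (((b * x) * b) * (b' * a)) * ((b * y) * b)) ∧
    (∃ f : C →ₗ[R] C, Function.Bijective f ∧
      ∀ x y : C, f ((x * a) * (a * y)) = f x * f y) := by
  have fl := flex' halt₁ halt₂
  have lm := lm' halt₁ halt₂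
  have rm := rm' halt₁ halt₂
  have iA' := inv_cancel halt₁ halt₂ a' a ha' ha
  have iB' := inv_cancel halt₁ halt₂ b' b hb' hb
  have bij : ∀ c c' : C, c * c' = 1 → c' * c = 1 →
      Function.Bijective (fun x : C => (c * x) * c) := by
    intro c c' hc hc'
    have iC := inv_cancel halt₁ halt₂ c c' hc hc'
    have iC' := inv_cancel halt₁ halt₂ c' c hc' hc
    refine Function.bijective_iff_has_inverse.mpr ⟨fun x => (c' * x) * c', ?_, ?_⟩
    · intro x
      show (c' * ((c * x) * c)) * c' = x
      rw [fl c x, (iC (x * c)).2, (iC x).1]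
    · intro x
      show (c * ((c' * x) * c')) * c = x
      rw [fl c' x, (iC' (x * c')).2, (iC' x).1]
  have keyA : ∀ c x y : C, (a * ((x * a) * (c * y))) * a =
      ((a * x) * a) * ((c * a') * ((a * y) * a)) := by
    intro c x y
    conv_lhs => rw [← (iA' (c * y)).2]
    rw [lm a (x * a) (a' * (c * y)), ← fl a x, rm a ((a * x) * a) (a' * (c * y)),
      (iA' (c * y)).2]
    have h5 : (c * y) * a = (c * a') * ((a * y) * a) := by
      conv_lhs => rw [← (iA' c).1]
      exact rm a (c * a') y
    rw [h5]
  have keyB : ∀ x y : C, (b * ((x * a) * (b * y))) * b =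
      (((b * x) * b) * (b' * a)) * ((b * y) * b) := by
    intro x y
    conv_lhs => rw [← (iB' (x * a)).1]
    rw [fl b ((((x * a) * b') * b) * (b * y)), rm b ((x * a) * b') (b * y),
      fl b (b * y), lm b ((x * a) * b') ((b * y) * b), fl b ((x * a) * b'),
      (iB' (x * a)).1]
    have h5 : b * (x * a) = ((b * x) * b) * (b' * a) := by
      conv_lhs => rw [← (iB' a).2]
      exact lm b x (b' * a)
    rw [h5]
  refine ⟨⟨bij a a' ha ha', fun x y => keyA b x y⟩, ⟨bij b b' hb hb', keyB⟩, ?_⟩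
  refine ⟨{ toFun := fun x => (a * x) * a,
            map_add' := by intro u v; simp [mul_add, add_mul],
            map_smul' := by
              intro r u
              simp only [RingHom.id_apply, mul_smul_comm, smul_mul_assoc] },
          bij a a' ha ha', ?_⟩
  intro x y
  have h := keyA a x y
  rw [ha, one_mul] at h
  exact h
end

section
/- Let C be a composition algebra over a commutative unital ring R with norm q, and let a, b ∈ C be invertible. Set λ := q(a·b) = q(a)·q(b). Then the quadratic form q' := λ·q is multiplicative for the isotope multiplication, i.e. q'(x *_{a,b} y) = q'(x)·q'(y) for all x, y ∈ C, so that the isotope C^{a,b}, equipped with q', is again a composition algebra, with unit element (a·b)⁻¹. Moreover the map x ↦ (a·b)⁻¹·x is an isometry from (C, q) onto (C^{a,b}, q') sending 1 to the unit element of C^{a,b}. -/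
/-- The conjugation `x̄ = b_q(x,1)·1 − x` of a composition algebra. -/
def octConj {R C : Type*} [CommRing R] [NonAssocRing C] [Module R C]
    (q : QuadraticForm R C) (x : C) : C :=
  QuadraticMap.polar (⇑q) x 1 • (1 : C) - x

set_option linter.unusedSectionVars false

namespace IsotopeAux

open QuadraticMap

variable {R C : Type*} [CommRing R] [NonAssocRing C] [Module R C]
    [SMulCommClass R C C] [IsScalarTower R C C]
    (q : QuadraticForm R C)

theorem L1 (hmul : ∀ x y : C, q (x * y) = q x * q y) (x y z : C) :
    polar ⇑q (x*z) (y*z) = polar ⇑q x y * q z := by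
  simp only [polar, ← add_mul, hmul]; ring

theorem L2 (hmul : ∀ x y : C, q (x * y) = q x * q y) (x y z : C) :
    polar ⇑q (z*x) (z*y) = q z * polar ⇑q x y := by
  simp only [polar, ← mul_add, hmul]; ring

theorem qadd (x y : C) : q (x + y) = q x + q y + polar ⇑q x y := by
  simp [polar]

theorem L3 (hmul : ∀ x y : C, q (x * y) = q x * q y) (x y w z : C) :
    polar ⇑q (x*w) (y*z) + polar ⇑q (x*z) (y*w) = polar ⇑q x y * polar ⇑q w z := by
  have h := L1 q hmul x y (w+z)
  simp only [mul_add, polar_add_left, polar_add_right, qadd] at h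
  have h1 := L1 q hmul x y w
  have h2 := L1 q hmul x y z
  linear_combination h - h1 - h2


theorem pinj (hns : Function.Bijective ⇑(QuadraticMap.polarBilin q)) {u v : C}
    (h : ∀ w, polar ⇑q u w = polar ⇑q v w) : u = v := by
  apply hns.injective
  ext w
  simpa using h w

theorem qone [Module.Projective R C] [FaithfulSMul R C]
    (hmul : ∀ x y : C, q (x * y) = q x * q y)
    (hns : Function.Bijective ⇑(QuadraticMap.polarBilin q)) : q 1 = 1 := by
  have hz : ∀ y : C, (1 - q 1) * q y = 0 := fun y => by
    have h := hmul 1 y; rw [one_mul] at h; linear_combination h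
  have hp : ∀ u w : C, (1 - q 1) * polar ⇑q u w = 0 := by
    intro u w
    simp only [polar]
    linear_combination hz (u + w) - hz u - hz w
  have hf : ∀ (f : C →ₗ[R] R) (x : C), (1 - q 1) * f x = 0 := by
    intro f x
    obtain ⟨u, hu⟩ := hns.surjective f
    rw [← hu]
    exact hp u x
  have hsz : ∀ x : C, (1 - q 1) • x = 0 := by
    intro x
    obtain ⟨s, hs⟩ := Module.projective_def'.mp ‹Module.Projective R C›
    have hx : Finsupp.linearCombination R id (s x) = x := LinearMap.congr_fun hs x
    calc (1 - q 1) • x = Finsupp.linearCombination R (id : C → C) ((1 - q 1) • s x) := by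
          rw [_root_.map_smul, hx]
      _ = Finsupp.linearCombination R (id : C → C) (0 : C →₀ R) := by
          congr 1
          ext c
          simpa using hf ((Finsupp.lapply c).comp s) x
      _ = 0 := map_zero _
  refine (FaithfulSMul.eq_of_smul_eq_smul (fun x : C => ?_))
  rw [one_smul]
  have h := hsz x
  rw [sub_smul, one_smul, sub_eq_zero] at h; exact h.symm

theorem polarA (hmul : ∀ x y : C, q (x * y) = q x * q y) (x z w : C) :
    polar ⇑q (x*z) w = polar ⇑q (octConj q x * w) z := by
  have h := L3 q hmul x 1 w z
  rw [one_mul, one_mul] at h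
  rw [octConj, sub_mul, smul_mul_assoc, one_mul, polar_sub_left, polar_smul_left, smul_eq_mul]
  linear_combination h

theorem polarB (hmul : ∀ x y : C, q (x * y) = q x * q y) (x z y : C) :
    polar ⇑q (x*z) y = polar ⇑q x (y * octConj q z) := by
  have h := L3 q hmul x y 1 z
  rw [mul_one, mul_one] at h
  have hc : polar ⇑q (1:C) z = polar ⇑q z (1:C) := polar_comm _ _ _
  rw [octConj, mul_sub, mul_smul_comm, mul_one, polar_sub_right, polar_smul_right, smul_eq_mul]
  linear_combination h + polar ⇑q x y * hc

theorem polar_conj_swap (u v : C) :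
    polar ⇑q (octConj q u) v = polar ⇑q u (octConj q v) := by
  rw [octConj, octConj, polar_sub_left, polar_smul_left, polar_sub_right, polar_smul_right,
    smul_eq_mul, smul_eq_mul]
  have h1 : polar ⇑q (1:C) v = polar ⇑q v (1:C) := polar_comm _ _ _
  linear_combination polar ⇑q u 1 * h1

theorem polar11 [Module.Projective R C] [FaithfulSMul R C]
    (hmul : ∀ x y : C, q (x * y) = q x * q y)
    (hns : Function.Bijective ⇑(QuadraticMap.polarBilin q)) :
    polar ⇑q (1:C) 1 = 2 := by
  have h1 : q (1 : C) = 1 := qone q hmul hns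
  have h2 : ((1:C) + 1) = (2:R) • (1:C) := by
    rw [two_smul]
  rw [polar, h2, QuadraticMap.map_smul, h1]
  norm_num

theorem conj_conj [Module.Projective R C] [FaithfulSMul R C]
    (hmul : ∀ x y : C, q (x * y) = q x * q y)
    (hns : Function.Bijective ⇑(QuadraticMap.polarBilin q)) (x : C) :
    octConj q (octConj q x) = x := by
  conv_lhs => rw [octConj, octConj]
  rw [polar_sub_left, polar_smul_left, polar11 q hmul hns, smul_eq_mul]
  have h : polar ⇑q x 1 * 2 - polar ⇑q x 1 = polar ⇑q x 1 := by ring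
  rw [h, sub_sub_cancel]

theorem C1 (hmul : ∀ x y : C, q (x * y) = q x * q y)
    (hns : Function.Bijective ⇑(QuadraticMap.polarBilin q)) (x w : C) :
    octConj q x * (x * w) = q x • w := by
  refine pinj q hns (fun z => ?_)
  rw [← polarA q hmul x z (x*w), L2 q hmul, polar_smul_left, smul_eq_mul,
    polar_comm (⇑q) w z]

theorem C2 [Module.Projective R C] [FaithfulSMul R C]
    (hmul : ∀ x y : C, q (x * y) = q x * q y)
    (hns : Function.Bijective ⇑(QuadraticMap.polarBilin q)) (x w : C) :
    (w * x) * octConj q x = q x • w := by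
  refine pinj q hns (fun y => ?_)
  rw [polarB q hmul, conj_conj q hmul hns, L1 q hmul, polar_smul_left, smul_eq_mul, mul_comm]

theorem C3 (hmul : ∀ x y : C, q (x * y) = q x * q y)
    (hns : Function.Bijective ⇑(QuadraticMap.polarBilin q)) (x : C) :
    octConj q x * x = q x • 1 := by
  have h := C1 q hmul hns x 1
  rwa [mul_one] at h

theorem C4 [Module.Projective R C] [FaithfulSMul R C]
    (hmul : ∀ x y : C, q (x * y) = q x * q y)
    (hns : Function.Bijective ⇑(QuadraticMap.polarBilin q)) (x : C) :
    x * octConj q x = q x • 1 := by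
  have h := C2 q hmul hns x 1
  rwa [one_mul] at h

theorem q_conj [Module.Projective R C] [FaithfulSMul R C]
    (hmul : ∀ x y : C, q (x * y) = q x * q y)
    (hns : Function.Bijective ⇑(QuadraticMap.polarBilin q)) (x : C) :
    q (octConj q x) = q x := by
  have h1 : q (1 : C) = 1 := qone q hmul hns
  rw [octConj, sub_eq_add_neg, qadd, QuadraticMap.map_smul, QuadraticMap.map_neg,
    polar_neg_right, polar_smul_left, h1, smul_eq_mul, smul_eq_mul,
    polar_comm (⇑q) x 1]
  ring


theorem conjab_a (hmul : ∀ x y : C, q (x * y) = q x * q y)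
    (hns : Function.Bijective ⇑(QuadraticMap.polarBilin q)) (a b : C) :
    octConj q (a * b) * a = q a • octConj q b := by
  refine pinj q hns (fun z => ?_)
  rw [← polarA q hmul (a*b) z a, polarB q hmul (a*b) z a, L2 q hmul,
    ← polar_conj_swap, polar_smul_left, smul_eq_mul]

theorem b_conjab [Module.Projective R C] [FaithfulSMul R C]
    (hmul : ∀ x y : C, q (x * y) = q x * q y)
    (hns : Function.Bijective ⇑(QuadraticMap.polarBilin q)) (a b : C) :
    b * octConj q (a * b) = q b • octConj q a := by
  refine pinj q hns (fun z => ?_)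
  rw [polarB q hmul b (octConj q (a*b)) z, conj_conj q hmul hns,
    polar_comm (⇑q) b (z * (a*b)), polarA q hmul z (a*b) b, L1 q hmul,
    polar_conj_swap, polar_comm (⇑q) z (octConj q a), polar_smul_left, smul_eq_mul,
    mul_comm]

end IsotopeAux

/-- Let `C` be a composition algebra over `R` with norm `q` and let `a, b ∈ C`
be invertible (`q a, q b ∈ Rˣ`).  Set `λ = q(a·b) = q(a)·q(b)`.  Then `q' = λ·q`
is multiplicative for the isotope multiplication `x *_{a,b} y = (x·a)·(b·y)`
and nonsingular, so `(C^{a,b}, q')` is again a composition algebra with unit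
element `e = (a·b)⁻¹ = q(a·b)⁻¹ • conj(a·b)`; moreover `x ↦ e·x` is an isometry
`(C,q) → (C^{a,b}, q')` sending `1` to the unit element of `C^{a,b}`. -/
theorem isotope_is_composition_algebra
    {R C : Type*} [CommRing R] [NonAssocRing C] [Module R C]
    [SMulCommClass R C C] [IsScalarTower R C C]
    [Module.Finite R C] [Module.Projective R C] [FaithfulSMul R C]
    (q : QuadraticForm R C)
    (hmul : ∀ x y : C, q (x * y) = q x * q y)
    (hns : Function.Bijective ⇑(QuadraticMap.polarBilin q))
    (a b : C) (ha : IsUnit (q a)) (hb : IsUnit (q b)) :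
    let e : C := ((↑((ha.unit * hb.unit)⁻¹) : R)) • octConj q (a * b)
    q (a * b) = q a * q b ∧
    (∀ x y : C, (q a * q b) * q ((x * a) * (b * y)) =
      ((q a * q b) * q x) * ((q a * q b) * q y)) ∧
    Function.Bijective ⇑(QuadraticMap.polarBilin ((q a * q b) • q)) ∧
    ((a * b) * e = 1 ∧ e * (a * b) = 1) ∧
    (∀ x : C, (e * a) * (b * x) = x ∧ (x * a) * (b * e) = x) ∧
    (Function.Bijective (fun x : C => e * x) ∧
      (∀ x : C, (q a * q b) * q (e * x) = q x) ∧ e * 1 = e) := by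
  intro e
  set u : Rˣ := ha.unit * hb.unit with hu
  have he : e = ((u⁻¹ : Rˣ) : R) • octConj q (a*b) := rfl
  have huv : (u : R) = q a * q b := by simp [hu]
  have hab : q (a*b) = (u : R) := by rw [hmul, huv]
  have hiu : ((u⁻¹:Rˣ):R) * (u:R) = 1 := u.inv_mul
  refine ⟨by rw [hmul], fun x y => by rw [hmul, hmul, hmul]; ring, ?_, ?_, ?_, ?_⟩
  · have hcoe : ⇑(QuadraticMap.polarBilin ((q a * q b) • q)) =
        (fun f : C →ₗ[R] R => (u:R) • f) ∘ ⇑(QuadraticMap.polarBilin q) := by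
      funext x
      ext y
      simp only [QuadraticMap.polarBilin_apply_apply, Function.comp_apply, LinearMap.smul_apply, smul_eq_mul, QuadraticMap.polar, QuadraticMap.smul_apply, huv]
      ring
    rw [hcoe]
    refine Function.Bijective.comp ?_ hns
    constructor
    · intro f g h
      have h2 := congrArg (fun f => ((u⁻¹:Rˣ):R) • f) h
      simpa [smul_smul, hiu] using h2
    · intro f
      exact ⟨((u⁻¹:Rˣ):R) • f, by simp [smul_smul, u.mul_inv]⟩
  · constructor
    · rw [he, mul_smul_comm, IsotopeAux.C4 q hmul hns, hab, smul_smul, hiu, one_smul]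
    · rw [he, smul_mul_assoc, IsotopeAux.C3 q hmul hns, hab, smul_smul, hiu, one_smul]
  · intro x
    constructor
    · have h1 : e * a = (((u⁻¹:Rˣ):R) * q a) • octConj q b := by
        rw [he, smul_mul_assoc, IsotopeAux.conjab_a q hmul hns, smul_smul]
      rw [h1, smul_mul_assoc, IsotopeAux.C1 q hmul hns, smul_smul]
      have h2 : ((u⁻¹:Rˣ):R) * q a * q b = 1 := by rw [mul_assoc, ← huv, hiu]
      rw [h2, one_smul]
    · have h1 : b * e = (((u⁻¹:Rˣ):R) * q b) • octConj q a := by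
        rw [he, mul_smul_comm, IsotopeAux.b_conjab q hmul hns, smul_smul]
      rw [h1, mul_smul_comm, IsotopeAux.C2 q hmul hns, smul_smul]
      have h2 : ((u⁻¹:Rˣ):R) * q b * q a = 1 := by
        rw [mul_assoc, mul_comm (q b), ← huv, hiu]
      rw [h2, one_smul]
  · have hqe : q e = ((u⁻¹:Rˣ):R) := by
      rw [he, QuadraticMap.map_smul, IsotopeAux.q_conj q hmul hns, hab, smul_eq_mul,
        mul_assoc, hiu, mul_one]
    refine ⟨⟨?_, ?_⟩, fun x => ?_, mul_one e⟩
    · intro x y hxy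
      simp only at hxy
      have h1 : q e • x = q e • y := by
        rw [← IsotopeAux.C1 q hmul hns e x, ← IsotopeAux.C1 q hmul hns e y, hxy]
      have h2 := congrArg (fun t => (u:R) • t) h1
      simpa [smul_smul, hqe, u.mul_inv] using h2
    · intro y
      refine ⟨(u:R) • (octConj q e * y), ?_⟩
      have h1 : e * (octConj q e * y) = q e • y := by
        have h2 := IsotopeAux.C1 q hmul hns (octConj q e) y
        rwa [IsotopeAux.conj_conj q hmul hns, IsotopeAux.q_conj q hmul hns] at h2
      show e * ((u:R) • (octConj q e * y)) = y
      rw [mul_smul_comm, h1, smul_smul, hqe, u.mul_inv, one_smul]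
    · rw [hmul, hqe, ← huv, ← mul_assoc, u.mul_inv, one_mul]
end

section
/- Let C be an octonion algebra over a commutative unital ring R, let x ∈ C be invertible (q(x) ∈ Rˣ) and let a ∈ C be an element of trace 1 (b_q(a,1) = 1). Then C is the internal direct sum of the submodule R·x and the submodule (ā·x)^⊥ = { y ∈ C : b_q(ā·x, y) = 0 }; that is, every z ∈ C can be written uniquely as z = r·x + n with r ∈ R and b_q(ā·x, n) = 0. -/
/-- An octonion algebra's underlying module is locally free of rank 8. -/
def IsRankEight (R C : Type*) [CommRing R] [AddCommGroup C] [Module R C] : Prop :=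
  ∀ (p : Ideal R) [p.IsPrime],
    Module.Free (Localization.AtPrime p) (LocalizedModule p.primeCompl C) ∧
    Module.finrank (Localization.AtPrime p) (LocalizedModule p.primeCompl C) = 8

/-- Let `C` be an octonion algebra over `R`, `x ∈ C` invertible (`q x ∈ Rˣ`)
and `a ∈ C` of trace `1`.  Then `C = R·x ⊕ (ā·x)^⊥`: every `z ∈ C` is uniquely
`z = r·x + n` with `r ∈ R` and `b_q(ā·x, n) = 0`. -/
theorem octonion_direct_sum_decomposition
    {R C : Type*} [CommRing R] [NonAssocRing C] [Module R C]
    [SMulCommClass R C C] [IsScalarTower R C C]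
    [Module.Finite R C] [Module.Projective R C] [FaithfulSMul R C]
    (q : QuadraticForm R C)
    (hmul : ∀ x y : C, q (x * y) = q x * q y)
    (hns : Function.Bijective ⇑(QuadraticMap.polarBilin q))
    (hrank : IsRankEight R C)
    (x a : C) (hx : IsUnit (q x))
    (ha : QuadraticMap.polar (⇑q) a 1 = 1) :
    ∀ z : C, ∃! p : R × C,
      z = p.1 • x + p.2 ∧ QuadraticMap.polar (⇑q) (octConj q a * x) p.2 = 0 := by
  intro z
  have key : ∀ w v y : C, QuadraticMap.polar (⇑q) (w * y) (v * y)
      = QuadraticMap.polar (⇑q) w v * q y := by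
    intro w v y
    simp only [QuadraticMap.polar, ← add_mul, hmul]
    ring
  have hc : octConj q a * x = x - a * x := by
    simp [octConj, ha, sub_mul]
  have hkey : QuadraticMap.polar (⇑q) (octConj q a * x) x = q x := by
    have h1 := key a 1 x
    rw [one_mul] at h1
    rw [hc, QuadraticMap.polar_sub_left, QuadraticMap.polar_self, h1, ha]
    simp [two_smul]
  obtain ⟨u, hu⟩ := hx
  set b := QuadraticMap.polar (⇑q) (octConj q a * x) z with hb
  refine ⟨(↑u⁻¹ * b, z - (↑u⁻¹ * b) • x), ⟨by module, ?_⟩, ?_⟩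
  · rw [QuadraticMap.polar_sub_right, QuadraticMap.polar_smul_right, hkey, ← hb,
      ← hu, smul_eq_mul]
    rw [mul_assoc, mul_comm b, ← mul_assoc]
    simp
  · rintro ⟨r, n⟩ ⟨h1, h2⟩
    have hbr : b = r * q x := by
      rw [hb, h1, QuadraticMap.polar_add_right, QuadraticMap.polar_smul_right,
        h2, hkey, smul_eq_mul, add_zero]
    have hr : r = ↑u⁻¹ * b := by
      rw [hbr, ← hu, mul_comm r, ← mul_assoc, Units.inv_mul, one_mul]
    have hn : n = z - (↑u⁻¹ * b) • x := by rw [h1, hr]; abel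
    exact Prod.ext hr hn
end

section
/- Let C be an octonion algebra over a commutative unital ring R with norm q, and let t₁, t₂, t₃ be bijective R-linear isometries of (C, q). Define the trilinear form Δ_q on C by Δ_q(w, x, y) = b_q(w, x̄·ȳ). Then the following are equivalent: (1) (t₁, t₂, t₃) is a related triple; (2) (t₂, t₃, t₁) is a related triple; (3) (t₃, t₁, t₂) is a related triple; (4) Δ_q(t₁(w), t₂(x), t₃(y)) = Δ_q(w, x, y) for all w, x, y ∈ C. -/
open QuadraticMap

set_option linter.unusedSectionVars false
set_option linter.unusedVariables false

section OctAux

variable {R C : Type*} [CommRing R] [NonAssocRing C] [Module R C]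
    [SMulCommClass R C C] [IsScalarTower R C C]
    [Module.Projective R C] [FaithfulSMul R C]
    (q : QuadraticForm R C)

/-- In a composition algebra, the norm of the identity is `1`. -/
lemma oct_q_one (hmul : ∀ x y : C, q (x * y) = q x * q y)
    (hns : Function.Bijective ⇑(QuadraticMap.polarBilin q)) : q 1 = 1 := by
  have hb : ∀ f : C →ₗ[R] R, ∀ x : C, (q 1 - 1) * f x = 0 := by
    intro f x
    obtain ⟨c, rfl⟩ := hns.2 f
    have h1 : ∀ z : C, q z = q 1 * q z := fun z => by
      have := hmul 1 z; rwa [one_mul] at this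
    have : (q 1 - 1) * polar (⇑q) c x = 0 := by
      simp only [QuadraticMap.polar]
      linear_combination h1 c + h1 x - h1 (c + x)
    simpa [QuadraticMap.polarBilin] using this
  have hz : ∀ x : C, (q 1 - 1) • x = (0 : R) • x := by
    intro x
    obtain ⟨s, hs⟩ := Module.Projective.out (R := R) (P := C)
    have hx := hs x
    rw [zero_smul, ← hx, Finsupp.linearCombination_apply, Finsupp.smul_sum]
    refine Finset.sum_eq_zero fun c hc => ?_
    have h0 : (q 1 - 1) * (s x) c = 0 := hb (Finsupp.lapply c ∘ₗ s) x
    show (q 1 - 1) • (s x) c • (id c : C) = 0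
    rw [smul_smul, h0, zero_smul]
  have := FaithfulSMul.eq_of_smul_eq_smul hz
  rwa [sub_eq_zero] at this

/-- Separation: the polar form is nondegenerate. -/
lemma oct_sep (hns : Function.Bijective ⇑(QuadraticMap.polarBilin q))
    {u v : C} (h : ∀ z : C, polar (⇑q) u z = polar (⇑q) v z) : u = v := by
  apply hns.1
  ext z
  simpa [QuadraticMap.polarBilin] using h z

/-- Linearization of multiplicativity in the first slot. -/
lemma oct_d1 (hmul : ∀ x y : C, q (x * y) = q x * q y) (x z y : C) :
    polar (⇑q) (x * y) (z * y) = polar (⇑q) x z * q y := by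
  simp only [QuadraticMap.polar, ← add_mul, hmul]
  ring

/-- Full linearization of multiplicativity. -/
lemma oct_d3 (hmul : ∀ x y : C, q (x * y) = q x * q y) (x y z w : C) :
    polar (⇑q) (x * y) (z * w) + polar (⇑q) (x * w) (z * y)
      = polar (⇑q) x z * polar (⇑q) y w := by
  have h := oct_d1 q hmul x z (y + w)
  rw [mul_add, mul_add, polar_add_left, polar_add_right, polar_add_right] at h
  rw [oct_d1 q hmul x z y, oct_d1 q hmul x z w] at h
  have hq : q (y + w) = q y + q w + polar (⇑q) y w := by
    simp only [QuadraticMap.polar]; ring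
  rw [hq] at h
  linear_combination h

lemma oct_b11 (hq1 : q 1 = 1) : polar (⇑q) (1 : C) 1 = 2 := by
  have : (1 : C) + 1 = (2 : R) • 1 := by rw [two_smul]
  rw [QuadraticMap.polar, this, QuadraticMap.map_smul, hq1]
  simp
  ring

lemma oct_bconj_expand (x y : C) :
    polar (⇑q) (octConj q x) (octConj q y)
      = polar (⇑q) x 1 * polar (⇑q) y 1 * polar (⇑q) (1 : C) 1
        - polar (⇑q) x 1 * polar (⇑q) (1 : C) y
        - polar (⇑q) y 1 * polar (⇑q) x 1 + polar (⇑q) x y := by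
  simp only [octConj, polar_sub_left, polar_sub_right, polar_smul_left, polar_smul_right,
    smul_eq_mul]
  ring

/-- Conjugation is an isometry of the polar form. -/
lemma oct_bconj (hq1 : q 1 = 1) (x y : C) :
    polar (⇑q) (octConj q x) (octConj q y) = polar (⇑q) x y := by
  rw [oct_bconj_expand, oct_b11 q hq1, polar_comm (⇑q) (1 : C) y]
  ring

lemma oct_bconj_one (hq1 : q 1 = 1) (x : C) :
    polar (⇑q) (octConj q x) 1 = polar (⇑q) x 1 := by
  rw [octConj, polar_sub_left, polar_smul_left, smul_eq_mul, oct_b11 q hq1]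
  ring

/-- Conjugation is an involution. -/
lemma oct_conj_conj (hq1 : q 1 = 1) (x : C) : octConj q (octConj q x) = x := by
  rw [octConj, oct_bconj_one q hq1, octConj]
  abel

lemma oct_bconj' (hq1 : q 1 = 1) (x y : C) :
    polar (⇑q) (octConj q x) y = polar (⇑q) x (octConj q y) := by
  conv_lhs => rw [← oct_conj_conj q hq1 y]
  rw [oct_bconj q hq1]

/-- `b(xy, z) = b(y, x̄z)`. -/
lemma oct_e1 (hmul : ∀ x y : C, q (x * y) = q x * q y) (x y z : C) :
    polar (⇑q) (x * y) z = polar (⇑q) y (octConj q x * z) := by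
  have h := oct_d3 q hmul x y 1 z
  rw [one_mul, one_mul] at h
  have hx : octConj q x * z = polar (⇑q) x 1 • z - x * z := by
    rw [octConj, sub_mul, smul_mul_assoc, one_mul]
  rw [hx, polar_sub_right, polar_smul_right, smul_eq_mul]
  rw [polar_comm (⇑q) (x * z) y] at h
  linear_combination h

/-- `b(xy, z) = b(x, zȳ)`. -/
lemma oct_e2 (hmul : ∀ x y : C, q (x * y) = q x * q y) (x y z : C) :
    polar (⇑q) (x * y) z = polar (⇑q) x (z * octConj q y) := by
  have h := oct_d3 q hmul x 1 z y
  rw [mul_one, mul_one] at h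
  have hy : z * octConj q y = polar (⇑q) y 1 • z - z * y := by
    rw [octConj, mul_sub, mul_smul_comm, mul_one]
  rw [hy, polar_sub_right, polar_smul_right, smul_eq_mul]
  rw [polar_comm (⇑q) (1 : C) y] at h
  linear_combination h

/-- Conjugation is an antiautomorphism. -/
lemma oct_anti (hmul : ∀ x y : C, q (x * y) = q x * q y)
    (hns : Function.Bijective ⇑(QuadraticMap.polarBilin q)) (hq1 : q 1 = 1) (x y : C) :
    octConj q (x * y) = octConj q y * octConj q x := by
  refine oct_sep q hns fun z => ?_
  rw [oct_bconj' q hq1, oct_e1 q hmul x y (octConj q z),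
    polar_comm (⇑q) y (octConj q x * octConj q z),
    oct_e2 q hmul (octConj q x) (octConj q z) y, oct_conj_conj q hq1,
    oct_e1 q hmul (octConj q y) (octConj q x) z, oct_conj_conj q hq1]

/-- Cyclic symmetry of the trilinear form `Δ_q`. -/
lemma oct_cyc (hmul : ∀ x y : C, q (x * y) = q x * q y)
    (hns : Function.Bijective ⇑(QuadraticMap.polarBilin q)) (hq1 : q 1 = 1) (w x y : C) :
    polar (⇑q) w (octConj q x * octConj q y)
      = polar (⇑q) y (octConj q w * octConj q x) := by
  rw [polar_comm (⇑q) w, oct_e1 q hmul (octConj q x) (octConj q y) w,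
    oct_conj_conj q hq1, polar_comm (⇑q) (octConj q y) (x * w),
    ← oct_bconj' q hq1, oct_anti q hmul hns hq1 x w, polar_comm]

/-- Isometries preserve the polar form. -/
lemma oct_bt (t : C →ₗ[R] C) (hit : ∀ x : C, q (t x) = q x) (x y : C) :
    polar (⇑q) (t x) (t y) = polar (⇑q) x y := by
  simp only [QuadraticMap.polar, ← map_add, hit]

/-- A triple is related iff it leaves `Δ_q` invariant. -/
lemma oct_main (hmul : ∀ x y : C, q (x * y) = q x * q y)
    (hns : Function.Bijective ⇑(QuadraticMap.polarBilin q)) (hq1 : q 1 = 1)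
    (t u v : C →ₗ[R] C) (hbt : Function.Bijective t) (hit : ∀ x : C, q (t x) = q x) :
    (∀ x y : C, t (x * y) = octConj q (u (octConj q x)) * octConj q (v (octConj q y))) ↔
    (∀ w x y : C, polar (⇑q) (t w) (octConj q (u x) * octConj q (v y))
        = polar (⇑q) w (octConj q x * octConj q y)) := by
  constructor
  · intro h w x y
    have h2 := h (octConj q x) (octConj q y)
    rw [oct_conj_conj q hq1, oct_conj_conj q hq1] at h2
    rw [← h2, oct_bt q t hit]
  · intro h x y
    refine oct_sep q hns ?_
    intro z
    obtain ⟨w, rfl⟩ := hbt.2 z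
    rw [oct_bt q t hit]
    have h2 := h w (octConj q x) (octConj q y)
    rw [oct_conj_conj q hq1, oct_conj_conj q hq1] at h2
    conv_rhs => rw [polar_comm]
    rw [h2, polar_comm]

/-- Invariance of `Δ_q` is cyclic in the triple. -/
lemma oct_dcyc (hmul : ∀ x y : C, q (x * y) = q x * q y)
    (hns : Function.Bijective ⇑(QuadraticMap.polarBilin q)) (hq1 : q 1 = 1)
    (t u v : C →ₗ[R] C)
    (h : ∀ w x y : C, polar (⇑q) (t w) (octConj q (u x) * octConj q (v y))
        = polar (⇑q) w (octConj q x * octConj q y)) :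
    ∀ w x y : C, polar (⇑q) (v w) (octConj q (t x) * octConj q (u y))
        = polar (⇑q) w (octConj q x * octConj q y) := by
  intro w x y
  rw [oct_cyc q hmul hns hq1 (v w) (t x) (u y),
    oct_cyc q hmul hns hq1 (u y) (v w) (t x), h x y w,
    oct_cyc q hmul hns hq1 x y w]

end OctAux

/-- Let `C` be an octonion algebra over `R` with norm `q` and let
`t₁, t₂, t₃` be bijective `R`-linear isometries of `(C, q)`.  With
`Δ_q(w,x,y) = b_q(w, x̄·ȳ)`, the following are equivalent:
(1) `(t₁,t₂,t₃)` is a related triple; (2) `(t₂,t₃,t₁)` is a related triple;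
(3) `(t₃,t₁,t₂)` is a related triple; (4) `Δ_q(t₁ w, t₂ x, t₃ y) = Δ_q(w,x,y)`
for all `w, x, y`. -/
theorem related_triple_cyclic_iff
    {R C : Type*} [CommRing R] [NonAssocRing C] [Module R C]
    [SMulCommClass R C C] [IsScalarTower R C C]
    [Module.Finite R C] [Module.Projective R C] [FaithfulSMul R C]
    (q : QuadraticForm R C)
    (hmul : ∀ x y : C, q (x * y) = q x * q y)
    (hns : Function.Bijective ⇑(QuadraticMap.polarBilin q))
    (hrank : IsRankEight R C)
    (t₁ t₂ t₃ : C →ₗ[R] C)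
    (hb₁ : Function.Bijective t₁) (hb₂ : Function.Bijective t₂)
    (hb₃ : Function.Bijective t₃)
    (hi₁ : ∀ x : C, q (t₁ x) = q x) (hi₂ : ∀ x : C, q (t₂ x) = q x)
    (hi₃ : ∀ x : C, q (t₃ x) = q x) :
    ((∀ x y : C, t₁ (x * y) =
        octConj q (t₂ (octConj q x)) * octConj q (t₃ (octConj q y))) ↔
     (∀ x y : C, t₂ (x * y) =
        octConj q (t₃ (octConj q x)) * octConj q (t₁ (octConj q y)))) ∧
    ((∀ x y : C, t₂ (x * y) =
        octConj q (t₃ (octConj q x)) * octConj q (t₁ (octConj q y))) ↔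
     (∀ x y : C, t₃ (x * y) =
        octConj q (t₁ (octConj q x)) * octConj q (t₂ (octConj q y)))) ∧
    ((∀ x y : C, t₃ (x * y) =
        octConj q (t₁ (octConj q x)) * octConj q (t₂ (octConj q y))) ↔
     (∀ w x y : C,
        QuadraticMap.polar (⇑q) (t₁ w) (octConj q (t₂ x) * octConj q (t₃ y)) =
        QuadraticMap.polar (⇑q) w (octConj q x * octConj q y))) := by
  have hq1 : q 1 = 1 := oct_q_one q hmul hns
  have m1 := oct_main q hmul hns hq1 t₁ t₂ t₃ hb₁ hi₁
  have m2 := oct_main q hmul hns hq1 t₂ t₃ t₁ hb₂ hi₂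
  have m3 := oct_main q hmul hns hq1 t₃ t₁ t₂ hb₃ hi₃
  have c1 := oct_dcyc q hmul hns hq1 t₁ t₂ t₃
  have c2 := oct_dcyc q hmul hns hq1 t₂ t₃ t₁
  have c3 := oct_dcyc q hmul hns hq1 t₃ t₁ t₂
  refine ⟨?_, ?_, ?_⟩
  · exact m1.trans (Iff.trans ⟨fun d => c3 (c1 d), fun d => c2 d⟩ m2.symm)
  · exact m2.trans (Iff.trans ⟨fun d => c1 (c2 d), fun d => c3 d⟩ m3.symm)
  · exact m3.trans ⟨fun d => c2 (c3 d), fun d => c1 d⟩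
end

section
/- Let R be an integral domain with field of fractions K, let M be a finitely generated projective R-module and q : M → R a quadratic form whose base change q_K to K is anisotropic (q_K(v) = 0 implies v = 0 for v ∈ M ⊗_R K). Then the unit sphere of q does not grow under polynomial or Laurent polynomial extension: every element m of M ⊗_R R[t] with (q base-changed to R[t])(m) = 1 is of the form m₀ ⊗ 1 for some m₀ ∈ M with q(m₀) = 1, and likewise every element m of M ⊗_R R[t, t⁻¹] with (q base-changed to R[t,t⁻¹])(m) = 1 is of the form m₀ ⊗ 1 for some m₀ ∈ M with q(m₀) = 1. -/
/-!
Over `R[t]` or `R[t, t⁻¹]` write `z = ∑ tⁱ ⊗ mᵢ`. If `d` is the largest (or smallest) exponent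
with `mᵢ ≠ 0`, then `t^(2d)` arises in `Q z` only from `Q (tᵈ ⊗ m_d) = t^(2d) q(m_d)`, and
`q(m_d) ≠ 0` because `q` is anisotropic: it embeds into the anisotropic form `q_K`, `M` being flat.
Comparing with `Q z = 1` forces `d = 0`, so `z = 1 ⊗ m₀`.
-/

open TensorProduct

section UniqueAdd

variable {Γ : Type*} [AddCommMonoid Γ] [LinearOrder Γ] [IsOrderedCancelAddMonoid Γ]

theorem Finset.uniqueAdd_self_of_forall_le {s : Finset Γ} {d : Γ} (h : ∀ i ∈ s, i ≤ d) :
    UniqueAdd s s d d := fun i j hi hj hij =>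
  ⟨(h i hi).eq_of_not_lt fun hlt => (add_lt_add_of_lt_of_le hlt (h j hj)).ne hij,
    (h j hj).eq_of_not_lt fun hlt => (add_lt_add_of_le_of_lt (h i hi) hlt).ne hij⟩

theorem Finset.uniqueAdd_self_of_forall_ge {s : Finset Γ} {d : Γ} (h : ∀ i ∈ s, d ≤ i) :
    UniqueAdd s s d d :=
  Finset.uniqueAdd_self_of_forall_le (Γ := Γᵒᵈ) h

theorem eq_zero_of_add_self_eq_zero {d : Γ} (h : d + d = 0) : d = 0 := by
  rcases lt_trichotomy d 0 with hneg | hzero | hpos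
  · exact absurd h (add_neg hneg hneg).ne
  · exact hzero
  · exact absurd h (add_pos hpos hpos).ne'

end UniqueAdd

theorem QuadraticMap.Anisotropic.of_baseChange {R K M : Type*} [CommRing R] [CommRing K]
    [Algebra R K] [FaithfulSMul R K] [AddCommGroup M] [Module R M] [Module.Flat R M]
    {q : QuadraticForm R M} {Q : QuadraticForm K (K ⊗[R] M)}
    (hQ : ∀ m : M, Q (1 ⊗ₜ m) = algebraMap R K (q m)) (hQa : Q.Anisotropic) :
    q.Anisotropic := fun m hm =>
  Module.Flat.tensorProduct_mk_injective R M K <| by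
    rw [map_zero]
    exact hQa _ (by rw [TensorProduct.mk_apply, hQ, hm, map_zero])

theorem Module.Basis.coord_mul_algebraMap {Γ R A : Type*} [DecidableEq Γ] [CommSemiring R]
    [Semiring A] [Algebra R A] (b : Basis Γ R A) (g i : Γ) (r : R) :
    b.coord g (b i * algebraMap R A r) = if i = g then r else 0 := by
  rw [← Algebra.commutes, ← Algebra.smul_def, LinearMap.map_smul, coord_apply, repr_self,
    Finsupp.single_apply, smul_eq_mul, mul_ite, mul_one, mul_zero]

theorem AddMonoidAlgebra.basis_add {G R : Type*} [AddMonoid G] [Semiring R] (i j : G) :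
    AddMonoidAlgebra.basis G R (i + j) =
      AddMonoidAlgebra.basis G R i * AddMonoidAlgebra.basis G R j := by
  simp only [basis_apply, single_mul_single, mul_one]

theorem Polynomial.basisMonomials_add {R : Type*} [Semiring R] (i j : ℕ) :
    basisMonomials R (i + j) = basisMonomials R i * basisMonomials R j := by
  simp only [coe_basisMonomials, monomial_mul_monomial, mul_one]

section MonomialBasis

variable {Γ R A M : Type*} [AddCommMonoid Γ] [CommRing R] [CommRing A] [Algebra R A]
  [AddCommGroup M] [Module R M] (b : Module.Basis Γ R A) (hb : ∀ i j, b (i + j) = b i * b j)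
  (q : QuadraticForm R M) {Q : QuadraticForm A (A ⊗[R] M)}
  (hQ : ∀ (c : A) (m : M), Q (c ⊗ₜ m) = c ^ 2 * algebraMap R A (q m))
  (hQpolar : ∀ (c c' : A) (m m' : M),
    QuadraticMap.polar Q (c ⊗ₜ m) (c' ⊗ₜ m') = c * c' * algebraMap R A (QuadraticMap.polar q m m'))
include hb hQ hQpolar

theorem coord_add_self_baseChange_sum [DecidableEq Γ] (s : Finset Γ) (n : Γ → M) {d : Γ}
    (hd : d ∈ s) (hu : UniqueAdd s s d d) :
    b.coord (d + d) (Q (∑ i ∈ s, b i ⊗ₜ n i)) = q (n d) := by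
  rw [QuadraticMap.map_sum, map_add, map_sum, map_sum]
  have hdiag : ∀ i ∈ s, b.coord (d + d) (Q (b i ⊗ₜ n i)) = if i = d then q (n d) else 0 := by
    intro i hi
    rw [hQ, sq, ← hb, b.coord_mul_algebraMap]
    by_cases hid : i = d
    · simp only [hid, if_true]
    · rw [if_neg hid, if_neg fun h => hid (hu hi hi h).1]
  have hoff : ∀ ij ∈ s.sym2.filter fun ij => ¬ ij.IsDiag,
      b.coord (d + d) (QuadraticMap.polarSym2 Q (ij.map fun i => b i ⊗ₜ n i)) = 0 := by
    refine fun ij => Sym2.ind (fun i j hij => ?_) ij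
    rw [Finset.mem_filter, Finset.mk_mem_sym2_iff, Sym2.mk_isDiag_iff] at hij
    rw [Sym2.map_mk, QuadraticMap.polarSym2_sym2Mk, hQpolar, ← hb, b.coord_mul_algebraMap,
      if_neg fun h => hij.2 ((hu hij.1.1 hij.1.2 h).1.trans (hu hij.1.1 hij.1.2 h).2.symm)]
  rw [Finset.sum_congr rfl hdiag, Finset.sum_ite_eq' s d, if_pos hd, Finset.sum_eq_zero hoff,
    add_zero]

theorem exists_eq_one_tmul_of_baseChange_eq_one [LinearOrder Γ] [IsOrderedCancelAddMonoid Γ]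
    (hb0 : b 0 = 1) (hq : q.Anisotropic) {z : A ⊗[R] M} (hz : Q z = 1) :
    ∃ m₀ : M, q m₀ = 1 ∧ z = 1 ⊗ₜ m₀ := by
  classical
  set f := equivFinsuppOfBasisLeft b z
  have hz_sum : z = ∑ i ∈ f.support, b i ⊗ₜ f i := by
    rw [← (equivFinsuppOfBasisLeft b).symm_apply_apply z, equivFinsuppOfBasisLeft_symm_apply]
    rfl
  have hextremal : ∀ d ∈ f.support, UniqueAdd f.support f.support d d → d = 0 := by
    intro d hd hu
    have hcoord := coord_add_self_baseChange_sum b hb q hQ hQpolar f.support f hd hu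
    rw [← hz_sum, hz, ← hb0, Module.Basis.coord_apply, Module.Basis.repr_self,
      Finsupp.single_apply] at hcoord
    split_ifs at hcoord with h
    · exact eq_zero_of_add_self_eq_zero h.symm
    · exact absurd (hq _ hcoord.symm) (Finsupp.mem_support_iff.mp hd)
  have hsupp : f.support ⊆ {0} := by
    intro k hk
    have hne : f.support.Nonempty := ⟨k, hk⟩
    have hmax := hextremal _ (f.support.max'_mem hne)
      (Finset.uniqueAdd_self_of_forall_le (f.support.le_max' · ·))
    have hmin := hextremal _ (f.support.min'_mem hne)
      (Finset.uniqueAdd_self_of_forall_ge (f.support.min'_le · ·))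
    exact Finset.mem_singleton.mpr
      (le_antisymm (hmax ▸ f.support.le_max' k hk) (hmin ▸ f.support.min'_le k hk))
  have hz0 : z = 1 ⊗ₜ f 0 := by
    rw [hz_sum, Finset.sum_subset hsupp fun i _ hi => by
      rw [Finsupp.notMem_support_iff.mp hi, tmul_zero], Finset.sum_singleton, hb0]
  refine ⟨f 0, ?_, hz0⟩
  have hcoord := congrArg (b.coord 0) hz
  rwa [hz0, hQ, one_pow, ← hb0, b.coord_mul_algebraMap, if_pos rfl, Module.Basis.coord_apply,
    Module.Basis.repr_self, Finsupp.single_eq_same] at hcoord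

end MonomialBasis

theorem sphere_rigid_under_polynomial_extension_general
    {R M : Type*} [CommRing R] [AddCommGroup M] [Module R M]
    [Module.Projective R M]
    (q : QuadraticForm R M)
    (K : Type*) [Field K] [Algebra R K] [IsFractionRing R K]
    (qK : QuadraticForm K (K ⊗[R] M))
    (hK1 : ∀ (c : K) (m : M), qK (c ⊗ₜ[R] m) = c ^ 2 * algebraMap R K (q m))
    (hKa : qK.Anisotropic)
    (qP : QuadraticForm (Polynomial R) (Polynomial R ⊗[R] M))
    (hP1 : ∀ (c : Polynomial R) (m : M),
      qP (c ⊗ₜ[R] m) = c ^ 2 * Polynomial.C (q m))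
    (hP2 : ∀ (c c' : Polynomial R) (m m' : M),
      QuadraticMap.polar (⇑qP) (c ⊗ₜ[R] m) (c' ⊗ₜ[R] m') =
        c * c' * Polynomial.C (QuadraticMap.polar (⇑q) m m'))
    (qL : QuadraticForm (LaurentPolynomial R) (LaurentPolynomial R ⊗[R] M))
    (hL1 : ∀ (c : LaurentPolynomial R) (m : M),
      qL (c ⊗ₜ[R] m) = c ^ 2 * algebraMap R (LaurentPolynomial R) (q m))
    (hL2 : ∀ (c c' : LaurentPolynomial R) (m m' : M),
      QuadraticMap.polar (⇑qL) (c ⊗ₜ[R] m) (c' ⊗ₜ[R] m') =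
        c * c' * algebraMap R (LaurentPolynomial R) (QuadraticMap.polar (⇑q) m m')) :
    (∀ z : Polynomial R ⊗[R] M, qP z = 1 →
      ∃ m₀ : M, q m₀ = 1 ∧ z = 1 ⊗ₜ[R] m₀) ∧
    (∀ z : LaurentPolynomial R ⊗[R] M, qL z = 1 →
      ∃ m₀ : M, q m₀ = 1 ∧ z = 1 ⊗ₜ[R] m₀) := by
  have hq : q.Anisotropic :=
    QuadraticMap.Anisotropic.of_baseChange (fun m => by rw [hK1, one_pow, one_mul]) hKa
  refine ⟨fun z hz => ?_, fun z hz => ?_⟩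
  · refine exists_eq_one_tmul_of_baseChange_eq_one (Polynomial.basisMonomials R)
      Polynomial.basisMonomials_add q (Q := qP) ?_ ?_ (by simp) hq hz
    · simpa only [Polynomial.algebraMap_eq] using hP1
    · simpa only [Polynomial.algebraMap_eq] using hP2
  · exact exists_eq_one_tmul_of_baseChange_eq_one (AddMonoidAlgebra.basis ℤ R)
      AddMonoidAlgebra.basis_add q hL1 hL2 rfl hq hz

/-- Let `R` be an integral domain with fraction field `K`, `M` a finitely
generated projective `R`-module and `q` a quadratic form on `M` whose base
change to `K` is anisotropic.  Then the unit sphere of `q` does not grow under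
polynomial or Laurent polynomial extension: every unit-norm element of the
base change of `q` to `R[t]` (resp. `R[t,t⁻¹]`) comes from a unit-norm element
of `M`.  The base-changed forms are given as data characterized by their
values and polar values on pure tensors. -/
theorem sphere_rigid_under_polynomial_extension
    {R M : Type*} [CommRing R] [IsDomain R] [AddCommGroup M] [Module R M]
    [Module.Finite R M] [Module.Projective R M]
    (q : QuadraticForm R M)
    (K : Type*) [Field K] [Algebra R K] [IsFractionRing R K]
    (qK : QuadraticForm K (K ⊗[R] M))
    (hK1 : ∀ (c : K) (m : M), qK (c ⊗ₜ[R] m) = c ^ 2 * algebraMap R K (q m))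
    (hK2 : ∀ (c c' : K) (m m' : M),
      QuadraticMap.polar (⇑qK) (c ⊗ₜ[R] m) (c' ⊗ₜ[R] m') =
        c * c' * algebraMap R K (QuadraticMap.polar (⇑q) m m'))
    (hKa : qK.Anisotropic)
    (qP : QuadraticForm (Polynomial R) (Polynomial R ⊗[R] M))
    (hP1 : ∀ (c : Polynomial R) (m : M),
      qP (c ⊗ₜ[R] m) = c ^ 2 * Polynomial.C (q m))
    (hP2 : ∀ (c c' : Polynomial R) (m m' : M),
      QuadraticMap.polar (⇑qP) (c ⊗ₜ[R] m) (c' ⊗ₜ[R] m') =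
        c * c' * Polynomial.C (QuadraticMap.polar (⇑q) m m'))
    (qL : QuadraticForm (LaurentPolynomial R) (LaurentPolynomial R ⊗[R] M))
    (hL1 : ∀ (c : LaurentPolynomial R) (m : M),
      qL (c ⊗ₜ[R] m) = c ^ 2 * algebraMap R (LaurentPolynomial R) (q m))
    (hL2 : ∀ (c c' : LaurentPolynomial R) (m m' : M),
      QuadraticMap.polar (⇑qL) (c ⊗ₜ[R] m) (c' ⊗ₜ[R] m') =
        c * c' * algebraMap R (LaurentPolynomial R) (QuadraticMap.polar (⇑q) m m')) :
    (∀ z : Polynomial R ⊗[R] M, qP z = 1 →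
      ∃ m₀ : M, q m₀ = 1 ∧ z = 1 ⊗ₜ[R] m₀) ∧
    (∀ z : LaurentPolynomial R ⊗[R] M, qL z = 1 →
      ∃ m₀ : M, q m₀ = 1 ∧ z = 1 ⊗ₜ[R] m₀) :=
  sphere_rigid_under_polynomial_extension_general q K qK hK1 hKa qP hP1 hP2 qL hL1 hL2
end
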